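/- arXiv:2407.03896 — 3 statements merged into one kernel-verified Lean document; each statement's English description precedes it below -/
import Mathlib

section
/- Let S be a finite set, F ⊆ S, δ > 0, and p(·|s) probability distributions on S. Define T on functions V : S → [0,1] by (T V)(s) = L(∑_{s'} p(s'|s) max(1_F(s'), V(s')) − δ). Then the sequence V_0 ≡ 0, V_{k+1} = T V_k is pointwise monotonically increasing and converges; its limit is the unique fixed point of T among functions S → [0,1]. -/
open Finset Filter Topology

/-- The truncation function `L(x) = min(1, max(0, x))`. -/
noncomputable def truncL (x : ℝ) : ℝ := min 1 (max 0 x)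

/-- The robust Bellman operator
`(T V)(s) = L(∑_{s'} p(s'|s) · max(1_F(s'), V(s')) − δ)`. -/
noncomputable def Tstd {S : Type*} [Fintype S] (F : Set S) [DecidablePred (· ∈ F)]
    (δ : ℝ) (p : S → S → ℝ) (V : S → ℝ) (s : S) : ℝ :=
  truncL (∑ s', p s s' * max (if s' ∈ F then (1 : ℝ) else 0) (V s') - δ)

lemma truncL_nonneg (x : ℝ) : 0 ≤ truncL x :=
  le_min zero_le_one (le_max_left 0 x)

lemma truncL_le_one (x : ℝ) : truncL x ≤ 1 := min_le_left _ _

lemma truncL_mono : Monotone truncL :=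
  fun _ _ h => min_le_min le_rfl (max_le_max le_rfl h)

lemma truncL_continuous : Continuous truncL :=
  continuous_const.min (continuous_const.max continuous_id)

/-- Any fixed point of `Tstd` with values in `[0,1]` is `≤` any other such fixed point. -/
lemma Tstd_fixed_le {S : Type*} [Fintype S] (F : Set S) [DecidablePred (· ∈ F)]
    (δ : ℝ) (hδ : 0 < δ) (p : S → S → ℝ)
    (hp0 : ∀ s s', 0 ≤ p s s') (hp1 : ∀ s, ∑ s', p s s' = 1)
    (W V : S → ℝ) (hW : ∀ s, W s ∈ Set.Icc (0:ℝ) 1) (hV : ∀ s, V s ∈ Set.Icc (0:ℝ) 1)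
    (hWf : Tstd F δ p W = W) (hVf : Tstd F δ p V = V) : ∀ s, W s ≤ V s := by
  classical
  by_contra hcon
  push_neg at hcon
  obtain ⟨z, hz⟩ := hcon
  obtain ⟨s₀, -, hs₀⟩ := Finset.exists_max_image Finset.univ (fun s => W s - V s)
    ⟨z, Finset.mem_univ z⟩
  set c := W s₀ - V s₀ with hc
  have hcpos : 0 < c := lt_of_lt_of_le (by linarith) (hs₀ z (Finset.mem_univ z))
  set mW := fun s' => max (if s' ∈ F then (1:ℝ) else 0) (W s') with hmW
  set mV := fun s' => max (if s' ∈ F then (1:ℝ) else 0) (V s') with hmV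
  have hmW_le_one : ∀ s', mW s' ≤ 1 := by
    intro s'; exact max_le (by split <;> norm_num) (hW s').2
  have hmV_le_one : ∀ s', mV s' ≤ 1 := by
    intro s'; exact max_le (by split <;> norm_num) (hV s').2
  have key : ∀ s₁, W s₁ - V s₁ = c →
      (∀ s', 0 < p s₁ s' → W s' - V s' = c ∧ s' ∉ F) ∧
      W s₁ = ∑ s', p s₁ s' * mW s' - δ := by
    intro s₁ h₁
    have hXle : ∑ s', p s₁ s' * mW s' ≤ 1 := by
      calc ∑ s', p s₁ s' * mW s' ≤ ∑ s', p s₁ s' * 1 :=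
            Finset.sum_le_sum (fun s' _ => mul_le_mul_of_nonneg_left (hmW_le_one s') (hp0 s₁ s'))
        _ = 1 := by simp [hp1 s₁]
    have hYle : ∑ s', p s₁ s' * mV s' ≤ 1 := by
      calc ∑ s', p s₁ s' * mV s' ≤ ∑ s', p s₁ s' * 1 :=
            Finset.sum_le_sum (fun s' _ => mul_le_mul_of_nonneg_left (hmV_le_one s') (hp0 s₁ s'))
        _ = 1 := by simp [hp1 s₁]
    have hWs : W s₁ = max 0 (∑ s', p s₁ s' * mW s' - δ) := by
      conv_lhs => rw [← hWf]
      unfold Tstd truncL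
      rw [min_eq_right]
      exact max_le (by linarith) (by linarith)
    have hWpos : 0 < W s₁ := by
      have := (hV s₁).1; linarith
    have hWeq : W s₁ = ∑ s', p s₁ s' * mW s' - δ := by
      rcases max_cases (0:ℝ) (∑ s', p s₁ s' * mW s' - δ) with ⟨h, _⟩ | ⟨h, _⟩
      · rw [hWs, h] at hWpos; exact absurd hWpos (lt_irrefl 0)
      · rw [hWs, h]
    have hVge : ∑ s', p s₁ s' * mV s' - δ ≤ V s₁ := by
      conv_rhs => rw [← hVf]
      unfold Tstd truncL
      exact le_min (by linarith) (le_max_right _ _)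
    have hterm : ∀ s', mW s' - mV s' ≤ c := by
      intro s'
      have h1 : W s' ≤ V s' + c := by have := hs₀ s' (Finset.mem_univ s'); linarith
      have : mW s' ≤ mV s' + c := by
        refine max_le ?_ ?_
        · exact le_add_of_le_of_nonneg (le_max_left _ _) hcpos.le
        · exact le_trans h1 (add_le_add_left (le_max_right _ _) c)
      linarith
    have hsum : c ≤ ∑ s', p s₁ s' * (mW s' - mV s') := by
      have hsplit : ∑ s', p s₁ s' * (mW s' - mV s') =
          (∑ s', p s₁ s' * mW s') - (∑ s', p s₁ s' * mV s') := by
        rw [← Finset.sum_sub_distrib]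
        exact Finset.sum_congr rfl (fun s' _ => by ring)
      rw [hsplit]; linarith
    have heach : ∀ s', 0 < p s₁ s' → mW s' - mV s' = c := by
      have hzero : ∑ s', p s₁ s' * (c - (mW s' - mV s')) = 0 := by
        have hle0 : ∑ s', p s₁ s' * (c - (mW s' - mV s')) ≤ 0 := by
          have : ∑ s', p s₁ s' * (c - (mW s' - mV s')) =
              c * (∑ s', p s₁ s') - ∑ s', p s₁ s' * (mW s' - mV s') := by
            rw [Finset.mul_sum, ← Finset.sum_sub_distrib]
            exact Finset.sum_congr rfl (fun s' _ => by ring)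
          rw [this, hp1 s₁]; linarith
        have hge0 : 0 ≤ ∑ s', p s₁ s' * (c - (mW s' - mV s')) :=
          Finset.sum_nonneg (fun s' _ =>
            mul_nonneg (hp0 s₁ s') (by linarith [hterm s']))
        linarith
      intro s' hp'
      have := (Finset.sum_eq_zero_iff_of_nonneg (fun s' _ =>
        mul_nonneg (hp0 s₁ s') (by linarith [hterm s']))).mp hzero s' (Finset.mem_univ s')
      rcases mul_eq_zero.mp this with h | h
      · exact absurd h (ne_of_gt hp')
      · linarith
    refine ⟨?_, hWeq⟩
    intro s' hp'
    have hd := heach s' hp'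
    by_cases hF : s' ∈ F
    · exfalso
      have h1 : mW s' = 1 := by
        rw [hmW]; simp only [if_pos hF]; exact max_eq_left (hW s').2
      have h2 : mV s' = 1 := by
        rw [hmV]; simp only [if_pos hF]; exact max_eq_left (hV s').2
      rw [h1, h2] at hd; linarith
    · have h1 : mW s' = W s' := by
        rw [hmW]; simp only [if_neg hF]; exact max_eq_right (hW s').1
      have h2 : mV s' = V s' := by
        rw [hmV]; simp only [if_neg hF]; exact max_eq_right (hV s').1
      rw [h1, h2] at hd
      exact ⟨hd, hF⟩
  -- maximize W over the set where W - V = c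
  set A := Finset.univ.filter (fun s => W s - V s = c) with hA
  have hs₀A : s₀ ∈ A := by simp [hA, hc]
  obtain ⟨t, htA, ht⟩ := Finset.exists_max_image A W ⟨s₀, hs₀A⟩
  have htc : W t - V t = c := (Finset.mem_filter.mp htA).2
  obtain ⟨hcl, hWt⟩ := key t htc
  have hle : ∑ s', p t s' * mW s' ≤ W t := by
    calc ∑ s', p t s' * mW s' ≤ ∑ s', p t s' * W t := by
          refine Finset.sum_le_sum (fun s' _ => ?_)
          rcases eq_or_lt_of_le (hp0 t s') with h0 | h0
          · rw [← h0]; simp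
          · obtain ⟨hc', hF⟩ := hcl s' h0
            have hms : mW s' = W s' := by
              rw [hmW]; simp only [if_neg hF]; exact max_eq_right (hW s').1
            rw [hms]
            exact mul_le_mul_of_nonneg_left
              (ht s' (Finset.mem_filter.mpr ⟨Finset.mem_univ s', hc'⟩)) h0.le
      _ = W t := by rw [← Finset.sum_mul, hp1 t, one_mul]
  linarith [hWt]

/-- The value iteration `V₀ ≡ 0`, `V_{k+1} = T V_k` is pointwise monotonically
increasing and converges; its limit is the unique fixed point of `T` among
functions `S → [0,1]`. -/
theorem Tstd_value_iteration_converges_to_unique_fixed_point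
    {S : Type*} [Fintype S] (F : Set S) [DecidablePred (· ∈ F)]
    (δ : ℝ) (hδ : 0 < δ) (p : S → S → ℝ)
    (hp0 : ∀ s s', 0 ≤ p s s') (hp1 : ∀ s, ∑ s', p s s' = 1) :
    (∀ s, Monotone (fun k : ℕ => (Tstd F δ p)^[k] (fun _ => 0) s)) ∧
    ∃ Vinf : S → ℝ,
      (∀ s, Vinf s ∈ Set.Icc (0 : ℝ) 1) ∧
      (∀ s, Tendsto (fun k : ℕ => (Tstd F δ p)^[k] (fun _ => 0) s)
        atTop (𝓝 (Vinf s))) ∧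
      Tstd F δ p Vinf = Vinf ∧
      (∀ W : S → ℝ, (∀ s, W s ∈ Set.Icc (0 : ℝ) 1) →
        Tstd F δ p W = W → W = Vinf) := by
  classical
  set Vseq : ℕ → S → ℝ := fun k => (Tstd F δ p)^[k] (fun _ => 0) with hVs
  have hmem : ∀ (V : S → ℝ) s, Tstd F δ p V s ∈ Set.Icc (0:ℝ) 1 :=
    fun V s => ⟨truncL_nonneg _, truncL_le_one _⟩
  have hmono : ∀ V V' : S → ℝ, (∀ s, V s ≤ V' s) → ∀ s, Tstd F δ p V s ≤ Tstd F δ p V' s := by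
    intro V V' h s
    apply truncL_mono
    apply sub_le_sub_right
    refine Finset.sum_le_sum (fun s' _ => ?_)
    exact mul_le_mul_of_nonneg_left (max_le_max le_rfl (h s')) (hp0 s s')
  have hstep : ∀ k s, Vseq k s ≤ Vseq (k+1) s := by
    intro k
    induction k with
    | zero =>
      intro s
      simpa [hVs] using (hmem (fun _ => 0) s).1
    | succ n ih =>
      intro s
      simp only [hVs, Function.iterate_succ_apply']
      exact hmono _ _ (fun s' => by simpa [hVs, Function.iterate_succ_apply'] using ih s') s
  have hmonoseq : ∀ s, Monotone fun k => Vseq k s :=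
    fun s => monotone_nat_of_le_succ (fun k => hstep k s)
  have hub : ∀ k s, Vseq k s ∈ Set.Icc (0:ℝ) 1 := by
    intro k s
    cases k with
    | zero => simp [hVs]
    | succ n => simp only [hVs, Function.iterate_succ_apply']; exact hmem _ s
  have hbdd : ∀ s, BddAbove (Set.range fun k => Vseq k s) := by
    intro s
    refine ⟨1, ?_⟩
    rintro x ⟨k, rfl⟩
    exact (hub k s).2
  set Vinf : S → ℝ := fun s => ⨆ k, Vseq k s with hVinf
  have htend : ∀ s, Tendsto (fun k => Vseq k s) atTop (𝓝 (Vinf s)) :=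
    fun s => tendsto_atTop_ciSup (hmonoseq s) (hbdd s)
  have hVinfmem : ∀ s, Vinf s ∈ Set.Icc (0:ℝ) 1 :=
    fun s => ⟨le_ciSup_of_le (hbdd s) 0 (hub 0 s).1, ciSup_le fun k => (hub k s).2⟩
  have hfix : Tstd F δ p Vinf = Vinf := by
    funext s
    have h1 : Tendsto (fun k => Tstd F δ p (Vseq k) s) atTop (𝓝 (Tstd F δ p Vinf s)) := by
      unfold Tstd
      apply (truncL_continuous.tendsto _).comp
      apply Tendsto.sub_const
      apply tendsto_finset_sum
      intro s' _
      exact ((continuous_const.mul (continuous_const.max continuous_id)).tendsto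
        (Vinf s')).comp (htend s')
    have h2 : Tendsto (fun k => Tstd F δ p (Vseq k) s) atTop (𝓝 (Vinf s)) := by
      have heq : (fun k => Tstd F δ p (Vseq k) s) = fun k => Vseq (k+1) s := by
        funext k
        simp [hVs, Function.iterate_succ_apply']
      rw [heq]
      exact (htend s).comp (tendsto_add_atTop_nat 1)
    exact tendsto_nhds_unique h1 h2
  refine ⟨fun s => hmonoseq s, Vinf, hVinfmem, htend, hfix, ?_⟩
  intro W hWmem hWfix
  funext s
  exact le_antisymm
    (Tstd_fixed_le F δ hδ p hp0 hp1 W Vinf hWmem hVinfmem hWfix hfix s)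
    (Tstd_fixed_le F δ hδ p hp0 hp1 Vinf W hVinfmem hWmem hfix hWfix s)
end

section
/- Value-function comparison under robustification: let S, Ŝ be finite sets, R ⊆ Ŝ × S a relation, and suppose W̄ is a probability kernel on Ŝ × S (given state pair and action) whose Ŝ-marginal equals the abstract kernel p̂ and such that W̄((Ŝ × S) \ R' | ẑ, z, a) ≤ δ for target relation R'. If V : Ŝ → [0,1] and V_c : Ŝ × S → [0,1] satisfy V(ŝ) ≤ V_c(ŝ, s) for all (ŝ, s) ∈ R', then L(∑_{ŝ'} p̂(ŝ'|ẑ, a) V(ŝ') − δ) ≤ ∑_{(ŝ',s')} W̄(ŝ', s' | ẑ, z, a) V_c(ŝ', s') for all (ẑ, z) ∈ R. -/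
open Finset

theorem truncL_le_of_le {x y : ℝ} (hy : 0 ≤ y) (hxy : x ≤ y) : truncL x ≤ y :=
  (min_le_right _ _).trans (max_le hy hxy)

/- Compare termwise: off `p`, the bound `f ≤ 1` makes `w * f - w` nonpositive. -/
theorem sum_mul_sub_sum_filter_not_le {ι : Type*} (s : Finset ι) (p : ι → Prop) [DecidablePred p]
    {w f g : ι → ℝ} (hw : ∀ i ∈ s, 0 ≤ w i) (hf : ∀ i ∈ s, ¬p i → f i ≤ 1)
    (hg : ∀ i ∈ s, ¬p i → 0 ≤ g i) (hfg : ∀ i ∈ s, p i → f i ≤ g i) :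
    ∑ i ∈ s, w i * f i - ∑ i ∈ s with ¬p i, w i ≤ ∑ i ∈ s, w i * g i := by
  rw [sum_filter, ← sum_sub_distrib]
  refine sum_le_sum fun i hi => ?_
  by_cases hp : p i
  · simpa [hp] using mul_le_mul_of_nonneg_left (hfg i hi hp) (hw i hi)
  · simp only [hp, not_false_eq_true, if_true]
    linarith [mul_le_of_le_one_right (hw i hi) (hf i hi hp), mul_nonneg (hw i hi) (hg i hi hp)]

theorem robust_value_comparison_general
    {Shat S : Type*} [Fintype Shat] [Fintype S]
    (R' : Set (Shat × S)) [DecidablePred (· ∈ R')]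
    (δ : ℝ)
    (w : Shat → S → ℝ) (hw0 : ∀ shat' s', 0 ≤ w shat' s')
    (phat : Shat → ℝ) (hmarg : ∀ shat', phat shat' = ∑ s', w shat' s')
    (hout : ∑ q ∈ Finset.univ.filter (fun q : Shat × S => q ∉ R'), w q.1 q.2 ≤ δ)
    (V : Shat → ℝ) (Vc : Shat → S → ℝ)
    (hV : ∀ shat', V shat' ∈ Set.Icc (0 : ℝ) 1)
    (hVc : ∀ shat' s', Vc shat' s' ∈ Set.Icc (0 : ℝ) 1)
    (hdom : ∀ shat' s', (shat', s') ∈ R' → V shat' ≤ Vc shat' s') :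
    truncL (∑ shat', phat shat' * V shat' - δ) ≤ ∑ shat', ∑ s', w shat' s' * Vc shat' s' := by
  have hlift : ∑ shat', phat shat' * V shat' = ∑ q : Shat × S, w q.1 q.2 * V q.1 := by
    simp only [hmarg, sum_mul, Fintype.sum_prod_type]
  rw [hlift, ← Fintype.sum_prod_type']
  refine truncL_le_of_le (sum_nonneg fun q _ => mul_nonneg (hw0 q.1 q.2) (hVc q.1 q.2).1) ?_
  calc ∑ q : Shat × S, w q.1 q.2 * V q.1 - δ
      ≤ ∑ q : Shat × S, w q.1 q.2 * V q.1 - ∑ q with q ∉ R', w q.1 q.2 := by linarith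
    _ ≤ ∑ q : Shat × S, w q.1 q.2 * Vc q.1 q.2 :=
      sum_mul_sub_sum_filter_not_le _ (· ∈ R') (fun q _ => hw0 q.1 q.2)
        (fun q _ _ => (hV q.1).2) (fun q _ _ => (hVc q.1 q.2).1) (fun q _ => hdom q.1 q.2)

/-- Value-function comparison under robustification: if the coupling kernel `w`
puts at most `δ` mass outside the target relation `R'`, has `Shat`-marginal `phat`,
and `V ≤ V_c` on `R'`, then
`L(∑ phat(shat') V(shat') − δ) ≤ ∑ w(shat',s') V_c(shat',s')` for every `(zhat,z) ∈ R`. -/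
theorem robust_value_comparison
    {Shat S : Type*} [Fintype Shat] [Fintype S]
    (R R' : Set (Shat × S)) [DecidablePred (· ∈ R')]
    (zhat : Shat) (z : S) (hz : (zhat, z) ∈ R)
    (δ : ℝ) (hδ0 : 0 ≤ δ) (hδ1 : δ ≤ 1)
    (w : Shat → S → ℝ) (hw0 : ∀ shat' s', 0 ≤ w shat' s')
    (hw1 : ∑ shat' : Shat, ∑ s' : S, w shat' s' = 1)
    (phat : Shat → ℝ) (hmarg : ∀ shat', phat shat' = ∑ s', w shat' s')
    (hout : ∑ q ∈ Finset.univ.filter (fun q : Shat × S => q ∉ R'), w q.1 q.2 ≤ δ)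
    (V : Shat → ℝ) (Vc : Shat → S → ℝ)
    (hV : ∀ shat', V shat' ∈ Set.Icc (0 : ℝ) 1)
    (hVc : ∀ shat' s', Vc shat' s' ∈ Set.Icc (0 : ℝ) 1)
    (hdom : ∀ shat' s', (shat', s') ∈ R' → V shat' ≤ Vc shat' s') :
    truncL (∑ shat', phat shat' * V shat' - δ) ≤ ∑ shat', ∑ s', w shat' s' * Vc shat' s' :=
  robust_value_comparison_general R' δ w hw0 phat hmarg hout V Vc hV hVc hdom
end

section
/- S-procedure implication for the contraction LMI: let D be symmetric positive definite, A an n×n matrix, β ∈ ℝⁿ, ε > 0, 0 ≤ α ≤ 1, and suppose there exists λ > 0 such that the block matrix [[λD, 0, (A)ᵀD],[0, (α² − λ)ε², βᵀD],[DA, Dβ, D]] is positive semidefinite. Then for all x ∈ ℝⁿ with xᵀ D x ≤ ε², the vector x⁺ = A x + β satisfies (x⁺)ᵀ D x⁺ ≤ α² ε². -/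
open Matrix

/-- S-procedure implication for the contraction LMI: if for some `λ > 0` the
block matrix `[[λD, 0, AᵀD],[0, (α² − λ)ε², βᵀD],[DA, Dβ, D]]` is positive
semidefinite, then `xᵀDx ≤ ε²` implies `(Ax + β)ᵀ D (Ax + β) ≤ α²ε²`. -/
theorem contraction_LMI_implies_contraction {n : ℕ}
    (D A : Matrix (Fin n) (Fin n) ℝ) (hD : D.PosDef) (β : Fin n → ℝ)
    (ε α lam : ℝ) (hε : 0 < ε) (hα0 : 0 ≤ α) (hα1 : α ≤ 1) (hlam : 0 < lam)
    (hM : (Matrix.fromBlocks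
        (Matrix.fromBlocks (lam • D) 0 0
          (((α ^ 2 - lam) * ε ^ 2) • (1 : Matrix (Fin 1) (Fin 1) ℝ)))
        (Matrix.fromRows (Aᵀ * D)
          (Matrix.of fun (_ : Fin 1) j => Matrix.vecMul β D j))
        (Matrix.fromCols (D * A)
          (Matrix.of fun i (_ : Fin 1) => (D *ᵥ β) i))
        D).PosSemidef) :
    ∀ x : Fin n → ℝ, x ⬝ᵥ D *ᵥ x ≤ ε ^ 2 →
      (A *ᵥ x + β) ⬝ᵥ D *ᵥ (A *ᵥ x + β) ≤ α ^ 2 * ε ^ 2 := by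
  intro x hx
  set y : Fin n → ℝ := A *ᵥ x + β with hy
  have h0 := hM.dotProduct_mulVec_nonneg (Sum.elim (Sum.elim x (fun _ => (1:ℝ))) (-y))
  simp only [star_trivial, fromBlocks_mulVec, Sum.elim_comp_inl, Sum.elim_comp_inr,
    fromRows_mulVec, fromCols_mulVec_sumElim, dotProduct_add, add_dotProduct,
    sumElim_dotProduct_sumElim, zero_mulVec, mulVec_zero, add_zero, zero_add,
    smul_mulVec, one_mulVec, mulVec_neg, dotProduct_neg, neg_dotProduct,
    dotProduct_smul, neg_neg, smul_eq_mul] at h0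
  have e1 : (fun _ : Fin 1 => (1:ℝ)) ⬝ᵥ (fun _ => 1) = 1 := by
    simp [dotProduct]
  have e2 : x ⬝ᵥ (Aᵀ * D) *ᵥ y = (A *ᵥ x) ⬝ᵥ D *ᵥ y := by
    rw [← mulVec_mulVec, dotProduct_mulVec, vecMul_transpose]
  have e3 : (fun _ : Fin 1 => (1:ℝ)) ⬝ᵥ (Matrix.of fun _ j => (β ᵥ* D) j) *ᵥ y
      = β ⬝ᵥ D *ᵥ y := by
    simp only [dotProduct_mulVec (v := β)]
    simp only [dotProduct, Fin.sum_univ_one, one_mul, mulVec, of_apply]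
  have e4 : y ⬝ᵥ (D * A) *ᵥ x = y ⬝ᵥ D *ᵥ (A *ᵥ x) := by
    rw [← mulVec_mulVec]
  have e5 : y ⬝ᵥ (Matrix.of fun i (_ : Fin 1) => (D *ᵥ β) i) *ᵥ (fun _ => (1:ℝ))
      = y ⬝ᵥ D *ᵥ β := by
    simp [dotProduct, mulVec, Fin.sum_univ_one]
  rw [e1, e2, e3, e4, e5] at h0
  have c1 : (A *ᵥ x) ⬝ᵥ D *ᵥ y + β ⬝ᵥ D *ᵥ y = y ⬝ᵥ D *ᵥ y := by
    rw [hy, add_dotProduct]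
  have c2 : y ⬝ᵥ D *ᵥ (A *ᵥ x) + y ⬝ᵥ D *ᵥ β = y ⬝ᵥ D *ᵥ y := by
    rw [hy, mulVec_add, dotProduct_add]
  nlinarith [h0, hx, hlam.le]
end
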